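/- arXiv:2111.02116 — 6 statements merged into one kernel-verified Lean document; each statement's English description precedes it below -/
import Mathlib

section
/- For x ∈ ℝ, the 3×3 matrix M with rows (1, x, x²), (x, 1/4 + x/2 + x²/4, x), (x², x, 1) is positive semidefinite if and only if x ∈ [-2 + √3, 1]. -/
/-!
The matrix commutes with the reflection swapping the first and last coordinates, so its
quadratic form splits along `e₀ - e₂` (weight `(1 - x²)/2`) and the plane spanned by `e₀ + e₂`
and `e₁`, where it is a binary form with leading coefficient `(1 + x²)/2 > 0`. Its discriminant
condition reads `(x - 1)² (x² + 4x + 1) ≥ 0`, and on `[-1, 1]` the factor `x² + 4x + 1` is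
nonnegative exactly from its root `-2 + √3` on.
-/

open Matrix

section BinaryQuadratic

variable {K : Type*} [Field K] [LinearOrder K] [IsStrictOrderedRing K]

theorem forall_quadratic_nonneg_iff {α β γ : K} (hα : 0 < α) :
    (∀ p q : K, 0 ≤ α * p ^ 2 + 2 * β * p * q + γ * q ^ 2) ↔ β ^ 2 ≤ α * γ := by
  refine ⟨fun h ↦ ?_, fun h p q ↦ ?_⟩
  · have := h (-β) α
    nlinarith
  · have completed_square : α * (α * p ^ 2 + 2 * β * p * q + γ * q ^ 2)
        = (α * p + β * q) ^ 2 + (α * γ - β ^ 2) * q ^ 2 := by ring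
    refine (mul_nonneg_iff_of_pos_left hα).mp ?_
    rw [completed_square]
    exact add_nonneg (sq_nonneg _) (mul_nonneg (sub_nonneg.mpr h) (sq_nonneg q))

end BinaryQuadratic

theorem centrosymmetric_quadForm (a b c d : ℝ) (v : Fin 3 → ℝ) :
    star v ⬝ᵥ (!![a, b, c; b, d, b; c, b, a] *ᵥ v)
      = (a - c) / 2 * (v 0 - v 2) ^ 2
        + ((a + c) / 2 * (v 0 + v 2) ^ 2 + 2 * b * (v 0 + v 2) * v 1 + d * v 1 ^ 2) := by
  simp only [star_trivial, dotProduct, mulVec, Fin.sum_univ_three, of_apply, cons_val',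
    cons_val_zero, cons_val_one, cons_val, cons_val_fin_one]
  ring

theorem posSemidef_centrosymmetric_iff (a b c d : ℝ) :
    (!![a, b, c; b, d, b; c, b, a]).PosSemidef ↔
      c ≤ a ∧ ∀ p q : ℝ, 0 ≤ (a + c) / 2 * p ^ 2 + 2 * b * p * q + d * q ^ 2 := by
  simp only [posSemidef_iff_dotProduct_mulVec, centrosymmetric_quadForm]
  constructor
  · rintro ⟨-, h⟩
    refine ⟨?_, fun p q ↦ ?_⟩
    · have : 0 ≤ (a - c) / 2 := by simpa using h ![1, 0, -1]
      linarith
    · simpa using h ![p / 2, q, p / 2]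
  · rintro ⟨hca, h⟩
    refine ⟨?_, fun v ↦ add_nonneg ?_ (h _ _)⟩
    · ext i j
      fin_cases i <;> fin_cases j <;> rfl
    · exact mul_nonneg (by linarith) (sq_nonneg _)

theorem neg_two_add_sqrt_three_le_iff {x : ℝ} (hx : -2 ≤ x) :
    -2 + √3 ≤ x ↔ 0 ≤ x ^ 2 + 4 * x + 1 := by
  rw [neg_add_le_iff_le_add, Real.sqrt_le_left (by linarith)]
  constructor <;> intro h <;> nlinarith

theorem mem_Icc_neg_two_add_sqrt_three_one_iff (x : ℝ) :
    x ∈ Set.Icc (-2 + √3) 1 ↔ x ^ 2 ≤ 1 ∧ 0 ≤ (x - 1) ^ 2 * (x ^ 2 + 4 * x + 1) := by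
  rw [Set.mem_Icc, sq_le_one_iff_abs_le_one, abs_le]
  constructor
  · rintro ⟨hlo, hhi⟩
    have one_le_sqrt : 1 ≤ √3 := Real.le_sqrt_of_sq_le (by norm_num)
    have hx : -1 ≤ x := by linarith
    exact ⟨⟨hx, hhi⟩,
      mul_nonneg (sq_nonneg _) ((neg_two_add_sqrt_three_le_iff (by linarith)).mp hlo)⟩
  · rintro ⟨⟨hx, hhi⟩, hprod⟩
    refine ⟨?_, hhi⟩
    rcases hhi.eq_or_lt with rfl | hlt
    · have sqrt_le : √3 ≤ 3 := Real.sqrt_le_iff.mpr ⟨by norm_num, by norm_num⟩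
      linarith
    · rw [neg_two_add_sqrt_three_le_iff (by linarith)]
      exact nonneg_of_mul_nonneg_right hprod (sq_pos_of_neg (sub_neg.mpr hlt))

theorem octahedron_gibbs_psd_iff (x : ℝ) :
    (Matrix.PosSemidef
      !![1, x, x^2;
         x, 1/4 + x/2 + x^2/4, x;
         x^2, x, 1]) ↔
    x ∈ Set.Icc (-2 + Real.sqrt 3) 1 := by
  have discriminant_gap : (1 + x ^ 2) / 2 * (1 / 4 + x / 2 + x ^ 2 / 4) - x ^ 2
      = (x - 1) ^ 2 * (x ^ 2 + 4 * x + 1) / 8 := by ring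
  rw [posSemidef_centrosymmetric_iff, forall_quadratic_nonneg_iff (by positivity),
    mem_Icc_neg_two_add_sqrt_three_one_iff]
  refine and_congr Iff.rfl ?_
  rw [← sub_nonneg, discriminant_gap]
  exact ⟨fun h ↦ by linarith, fun h ↦ by linarith⟩
end

section
/- Let V be a finite set and suppose for each n ∈ ℕ the kernel Q_n : V × V → ℝ is positive semidefinite, where Q_n(u,v) = (x_n)^{d(u,v)} for a metric d on V with values in ℕ, with x_n ∈ (0,1) and lim_{n→∞} x_n = 1. Then for every x ∈ [0,1] the kernel Q_x(u,v) = x^{d(u,v)} is positive semidefinite (with the convention 0^0 = 1). -/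
/-
For `0 < y ≤ 1` put `t = -log y ≥ 0` and `sₙ = t / (1 - xₙ) ≥ 0`. The kernel
`exp (sₙ (xₙ^d - 1))` is positive semidefinite, because the entrywise exponential of a positive
semidefinite kernel is (Schur product theorem applied to the exponential series), and
`(xₙ^k - 1) / (1 - xₙ) → -k` since `xₙ → 1`, so these kernels converge pointwise to
`exp (-t d) = y^d`. Positive semidefinite kernels form a closed set, which passes the property to
the limit, and then from `(0, 1]` to its closure `[0, 1]`.
-/

open scoped ComplexOrder

/-- A kernel `Q : V × V → ℝ` is positive semidefinite if
`Σ_{i,j} c_i conj(c_j) Q(u_i,u_j) ≥ 0` for all finite families of points and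
complex coefficients. -/
def IsPSDKernel {V : Type*} (Q : V → V → ℝ) : Prop :=
  ∀ (n : ℕ) (u : Fin n → V) (c : Fin n → ℂ),
    0 ≤ ∑ i : Fin n, ∑ j : Fin n, c i * (starRingEnd ℂ) (c j) * ((Q (u i) (u j) : ℝ) : ℂ)

open Filter Topology Matrix

theorem sum_sum_mul_conj_mul_eq_dotProduct_mulVec {V : Type*} (Q : V → V → ℝ) {n : ℕ}
    (u : Fin n → V) (c : Fin n → ℂ) :
    ∑ i, ∑ j, c i * (starRingEnd ℂ) (c j) * (Q (u i) (u j) : ℂ) =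
      c ⬝ᵥ ((of fun i j => (Q (u i) (u j) : ℂ)) *ᵥ star c) := by
  simp only [dotProduct, mulVec, of_apply, Finset.mul_sum, Pi.star_apply, Complex.star_def]
  exact Finset.sum_congr rfl fun i _ => Finset.sum_congr rfl fun j _ => by ring

namespace IsPSDKernel

variable {V : Type*} {Q R : V → V → ℝ}

/-- Complex coefficients force symmetry: test the kernel on `c = (1, i)`. -/
theorem symm (hQ : IsPSDKernel Q) (u v : V) : Q u v = Q v u := by
  have h := (Complex.nonneg_iff.1 (hQ 2 ![u, v] ![1, Complex.I])).2
  simp [Fin.sum_univ_two] at h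
  linarith

theorem _root_.isPSDKernel_iff_posSemidef :
    IsPSDKernel Q ↔
      ∀ (n : ℕ) (u : Fin n → V), (of fun i j => (Q (u i) (u j) : ℂ)).PosSemidef := by
  refine ⟨fun hQ n u => ?_, fun h n u c => ?_⟩
  · refine PosSemidef.of_dotProduct_mulVec_nonneg ?_ fun v => ?_
    · ext i j
      simp [hQ.symm (u i)]
    · have h := hQ n u (star v)
      rwa [sum_sum_mul_conj_mul_eq_dotProduct_mulVec, star_star] at h
  · simpa [sum_sum_mul_conj_mul_eq_dotProduct_mulVec] using
      (h n u).dotProduct_mulVec_nonneg (star c)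

theorem isClosed_setOf : IsClosed {Q : V → V → ℝ | IsPSDKernel Q} := by
  simp only [IsPSDKernel, Set.ofPred_forall]
  refine isClosed_iInter fun n => isClosed_iInter fun u => isClosed_iInter fun c => ?_
  exact isClosed_le continuous_const (by fun_prop)

theorem of_tendsto {ι : Type*} {l : Filter ι} [l.NeBot] {K : ι → V → V → ℝ}
    (hK : ∀ᶠ i in l, IsPSDKernel (K i))
    (hlim : ∀ u v, Tendsto (fun i => K i u v) l (𝓝 (Q u v))) : IsPSDKernel Q :=
  isClosed_setOf.mem_of_tendsto (x := Q)
    (tendsto_pi_nhds.2 fun u => tendsto_pi_nhds.2 (hlim u)) hK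

theorem one : IsPSDKernel fun _ _ : V => (1 : ℝ) := by
  intro n u c
  simpa [← Finset.sum_mul_sum, ← map_sum, Complex.mul_conj] using
    Complex.zero_le_real.2 (Complex.normSq_nonneg (∑ i, c i))

theorem const_mul (hQ : IsPSDKernel Q) {a : ℝ} (ha : 0 ≤ a) :
    IsPSDKernel fun u v => a * Q u v := by
  intro n u c
  have h : 0 ≤ (a : ℂ) * _ := mul_nonneg (Complex.zero_le_real.2 ha) (hQ n u c)
  simpa only [Finset.mul_sum, Complex.ofReal_mul, mul_left_comm (a : ℂ)] using h

theorem sum {ι : Type*} (s : Finset ι) {Q : ι → V → V → ℝ}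
    (hQ : ∀ i ∈ s, IsPSDKernel (Q i)) : IsPSDKernel fun u v => ∑ i ∈ s, Q i u v := by
  intro n u c
  simp only [Complex.ofReal_sum, Finset.mul_sum]
  rw [Finset.sum_congr rfl fun i _ => Finset.sum_comm, Finset.sum_comm]
  exact Finset.sum_nonneg fun k hk => hQ k hk n u c

theorem mul (hQ : IsPSDKernel Q) (hR : IsPSDKernel R) :
    IsPSDKernel fun u v => Q u v * R u v := by
  rw [isPSDKernel_iff_posSemidef] at *
  intro n u
  simpa [hadamard] using (hQ n u).hadamard (hR n u)

theorem pow (hQ : IsPSDKernel Q) (m : ℕ) : IsPSDKernel fun u v => Q u v ^ m := by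
  induction m with
  | zero => simpa using one
  | succ m ih => simpa [pow_succ] using ih.mul hQ

theorem exp (hQ : IsPSDKernel Q) : IsPSDKernel fun u v => Real.exp (Q u v) := by
  have hpartial (M : ℕ) : IsPSDKernel fun u v =>
      ∑ m ∈ Finset.range M, (m.factorial : ℝ)⁻¹ * Q u v ^ m :=
    sum _ fun m _ => (hQ.pow m).const_mul (by positivity)
  refine of_tendsto (l := atTop) (Eventually.of_forall hpartial) fun u v => ?_
  have h := (NormedSpace.expSeries_div_hasSum_exp (Q u v)).tendsto_sum_nat
  simpa only [← Real.exp_eq_exp_ℝ, div_eq_inv_mul] using h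

end IsPSDKernel

theorem tendsto_pow_sub_one_div_one_sub (k : ℕ) :
    Tendsto (fun x : ℝ => (x ^ k - 1) / (1 - x)) (𝓝[≠] 1) (𝓝 (-k)) := by
  have h := (hasDerivAt_iff_tendsto_slope.1 (hasDerivAt_pow k (1 : ℝ))).neg
  rw [one_pow, mul_one] at h
  refine h.congr fun x => ?_
  rw [slope_def_field, one_pow, ← div_neg, neg_sub]

theorem isPSDKernel_pow_of_tendsto_one {V : Type*} (d : V → V → ℕ) {x : ℕ → ℝ}
    (hx : ∀ n, x n < 1) (hlim : Tendsto x atTop (𝓝 1))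
    (hpsd : ∀ n, IsPSDKernel fun u v => x n ^ d u v) {y : ℝ} (hy₀ : 0 < y) (hy₁ : y ≤ 1) :
    IsPSDKernel fun u v => y ^ d u v := by
  set t := -Real.log y
  have ht : 0 ≤ t := neg_nonneg.2 (Real.log_nonpos hy₀.le hy₁)
  have happrox (n : ℕ) :
      IsPSDKernel fun u v => Real.exp (t * ((x n ^ d u v - 1) / (1 - x n))) := by
    have hs : 0 ≤ t / (1 - x n) := div_nonneg ht (sub_nonneg.2 (hx n).le)
    convert ((hpsd n).const_mul hs).exp.const_mul (Real.exp_pos (-(t / (1 - x n)))).le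
      using 3 with u v
    rw [← Real.exp_add]
    ring_nf
  have hx' : Tendsto x atTop (𝓝[≠] 1) :=
    tendsto_nhdsWithin_iff.2 ⟨hlim, Eventually.of_forall fun n => (hx n).ne⟩
  refine IsPSDKernel.of_tendsto (l := atTop) (Eventually.of_forall happrox) fun u v => ?_
  have hlim_exp := (((tendsto_pow_sub_one_div_one_sub (d u v)).comp hx').const_mul t).rexp
  rwa [neg_mul_neg, ← Real.rpow_def_of_pos hy₀, Real.rpow_natCast] at hlim_exp

theorem gibbs_psd_of_seq_tendsto_one_general {V : Type*} (d : V → V → ℕ)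
    (x : ℕ → ℝ) (hx : ∀ n, x n ∈ Set.Ioo (0 : ℝ) 1)
    (hlim : Filter.Tendsto x Filter.atTop (nhds 1))
    (hpsd : ∀ n, IsPSDKernel (fun u v => (x n) ^ d u v)) :
    ∀ y ∈ Set.Icc (0 : ℝ) 1, IsPSDKernel (fun u v => y ^ d u v) := by
  have hclosed : IsClosed {y : ℝ | IsPSDKernel fun u v => y ^ d u v} :=
    IsPSDKernel.isClosed_setOf.preimage (f := fun (y : ℝ) (u v : V) => y ^ d u v) (by fun_prop)
  have hIoc : Set.Ioc (0 : ℝ) 1 ⊆ {y : ℝ | IsPSDKernel fun u v => y ^ d u v} := fun y hy =>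
    isPSDKernel_pow_of_tendsto_one d (fun n => (hx n).2) hlim hpsd hy.1 hy.2
  rw [← closure_Ioc zero_ne_one]
  exact closure_minimal hIoc hclosed

theorem gibbs_psd_of_seq_tendsto_one {V : Type*} [Finite V] (d : V → V → ℕ)
    (hsymm : ∀ u v, d u v = d v u)
    (hzero : ∀ u v, d u v = 0 ↔ u = v)
    (htriangle : ∀ u v w, d u w ≤ d u v + d v w)
    (x : ℕ → ℝ) (hx : ∀ n, x n ∈ Set.Ioo (0 : ℝ) 1)
    (hlim : Filter.Tendsto x Filter.atTop (nhds 1))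
    (hpsd : ∀ n, IsPSDKernel (fun u v => (x n) ^ d u v)) :
    ∀ y ∈ Set.Icc (0 : ℝ) 1, IsPSDKernel (fun u v => y ^ d u v) :=
  gibbs_psd_of_seq_tendsto_one_general d x hx hlim hpsd
end

section
/- Let N ≥ 2, D ≥ 1 and let V = {1,…,N}^D with the Hamming distance d(u,v) = |{i : u_i ≠ v_i}|. For x ∈ ℝ the kernel Q_x(u,v) = x^{d(u,v)} (with 0^0 = 1) is positive semidefinite on V if and only if x ∈ [−1/(N−1), 1]. -/
open scoped ComplexOrder

/-!
Coordinatewise, `x ^ d(u, v) = ∏ᵢ (x + (1 - x) δ(uᵢ, vᵢ))`. The factor kernel `x + (1 - x) δ` on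
`N` points has eigenvalues `1 - x` and `1 + (N - 1) x`; when both are nonnegative it has an explicit
Gram representation, and the tensor product of these Gram vectors represents the Hamming kernel.
Conversely, points differing in a single coordinate realise the factor kernel, and the test vectors
`e_a - e_b` and `𝟙` force the two eigenvalues to be nonnegative.
-/

open Finset Function

section Kernel

variable {V W : Type*} {Q : V → V → ℝ}

theorem IsPSDKernel.comp (hQ : IsPSDKernel Q) (f : W → V) :
    IsPSDKernel fun a b => Q (f a) (f b) :=
  fun n u c => hQ n (f ∘ u) c

theorem IsPSDKernel.sum_mul_nonneg (hQ : IsPSDKernel Q) [Fintype W] (u : W → V) (c : W → ℝ) :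
    0 ≤ ∑ a, ∑ b, c a * c b * Q (u a) (u b) := by
  let e := (Fintype.equivFin W).symm
  have h := hQ _ (u ∘ e) fun i => (c (e i) : ℂ)
  simp only [comp_apply, Complex.conj_ofReal, ← Complex.ofReal_mul, ← Complex.ofReal_sum,
    Complex.zero_le_real] at h
  convert h using 1
  exact (Fintype.sum_equiv e _ _ fun i =>
    e.sum_comp fun b => c (e i) * c b * Q (u (e i)) (u b)).symm

theorem isPSDKernel_of_eq_sum_mul {ι : Type*} [Fintype ι] (φ : V → ι → ℝ)
    (hQ : ∀ u v, Q u v = ∑ k, φ u k * φ v k) : IsPSDKernel Q := by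
  intro n u c
  have hgram : ∑ i, ∑ j, c i * starRingEnd ℂ (c j) * (Q (u i) (u j) : ℂ) =
      ∑ k, (∑ i, c i * φ (u i) k) * starRingEnd ℂ (∑ i, c i * φ (u i) k) := by
    simp_rw [map_sum, map_mul, Complex.conj_ofReal, sum_mul_sum, hQ, Complex.ofReal_sum,
      Complex.ofReal_mul, mul_sum]
    rw [sum_comm_cycle]
    exact sum_congr rfl fun k _ => sum_congr rfl fun i _ => sum_congr rfl fun j _ => by ring
  rw [hgram]
  exact sum_nonneg fun k _ => by rw [Complex.mul_conj']; positivity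

end Kernel

section Hamming

variable {ι M : Type*} [Fintype ι] {β : ι → Type*} [∀ i, DecidableEq (β i)] [CommMonoid M]

theorem pow_hammingDist_eq_prod (x : M) (u v : ∀ i, β i) :
    x ^ hammingDist u v = ∏ i, if u i = v i then 1 else x := by
  rw [prod_ite, prod_const_one, one_mul, prod_const]
  rfl

theorem pow_hammingDist_update [DecidableEq ι] (x : M) (w : ∀ i, β i) (i : ι) (a b : β i) :
    x ^ hammingDist (update w i a) (update w i b) = if a = b then 1 else x := by
  rw [pow_hammingDist_eq_prod, Fintype.prod_eq_single i fun j hj => by simp [hj]]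
  simp

end Hamming

section Simplex

variable {α : Type*} [Fintype α] [DecidableEq α] {x : ℝ}

/-- The centred vectors `e_a - 𝟙 / N` have Gram matrix `δ_ab - 1 / N`; scaling them by `√(1 - x)`
and adding a constant coordinate of square `(1 + (N - 1) x) / N` gives Gram matrix `x + (1 - x) δ_ab`.
-/
noncomputable def simplexFeature (x : ℝ) (a : α) : Option α → ℝ
  | none => √((1 + (Fintype.card α - 1) * x) / Fintype.card α)
  | some k => √(1 - x) * ((if a = k then 1 else 0) - 1 / Fintype.card α)

theorem sum_simplexFeature_mul (hx₁ : x ≤ 1) (hx : 0 ≤ 1 + (Fintype.card α - 1) * x) (a b : α) :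
    ∑ k, simplexFeature x a k * simplexFeature x b k = if a = b then 1 else x := by
  have hN : (Fintype.card α : ℝ) ≠ 0 := by
    have : 0 < Fintype.card α := Fintype.card_pos_iff.mpr ⟨a⟩
    positivity
  have hcentered : ∑ k, ((if a = k then 1 else 0) - 1 / (Fintype.card α : ℝ)) *
      ((if b = k then 1 else 0) - 1 / Fintype.card α) =
        (if a = b then 1 else 0) - 1 / Fintype.card α := by
    simp only [sub_mul, mul_sub, ite_mul, one_mul, zero_mul, mul_ite, mul_one, mul_zero,
      sum_sub_distrib, sum_ite_eq, mem_univ, if_true, sum_const, card_univ, nsmul_eq_mul]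
    field_simp
    ring
  simp only [Fintype.sum_option, simplexFeature]
  have hsq : ∀ p q : ℝ, √(1 - x) * p * (√(1 - x) * q) = (1 - x) * (p * q) := fun p q => by
    rw [mul_mul_mul_comm, Real.mul_self_sqrt (sub_nonneg.mpr hx₁)]
  simp_rw [hsq, ← mul_sum, hcentered, Real.mul_self_sqrt (div_nonneg hx (Nat.cast_nonneg _))]
  split_ifs <;> field_simp <;> ring

end Simplex

theorem isPSDKernel_pow_hammingDist {ι α : Type*} [Fintype ι] [Fintype α] [DecidableEq α] {x : ℝ}
    (hx₁ : x ≤ 1) (hx : 0 ≤ 1 + (Fintype.card α - 1) * x) :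
    IsPSDKernel fun u v : ι → α => x ^ hammingDist u v := by
  classical
  refine isPSDKernel_of_eq_sum_mul (fun u (f : ι → Option α) => ∏ i, simplexFeature x (u i) (f i))
    fun u v => ?_
  simp_rw [pow_hammingDist_eq_prod, ← sum_simplexFeature_mul hx₁ hx, Fintype.prod_sum,
    prod_mul_distrib]

section Necessity

variable {α : Type*} [DecidableEq α] {x : ℝ}

theorem IsPSDKernel.le_one_of_ite (h : IsPSDKernel fun a b : α => if a = b then 1 else x)
    {a b : α} (hab : a ≠ b) : x ≤ 1 := by
  have := h.sum_mul_nonneg ![a, b] ![1, -1]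
  simp only [Fin.sum_univ_two, Matrix.cons_val_zero, Matrix.cons_val_one, Matrix.cons_val_fin_one,
    hab, hab.symm, if_true, if_false] at this
  linarith

theorem IsPSDKernel.one_add_mul_nonneg_of_ite [Fintype α] [Nonempty α]
    (h : IsPSDKernel fun a b : α => if a = b then 1 else x) :
    0 ≤ 1 + (Fintype.card α - 1) * x := by
  have hsum := h.sum_mul_nonneg id 1
  have hrow : ∀ a : α, ∑ b, (if a = b then 1 else x) = 1 + (Fintype.card α - 1) * x := by
    intro a
    simp [sum_ite, filter_eq, filter_ne, Nat.cast_sub Fintype.card_pos]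
  simp only [Pi.one_apply, one_mul, id, hrow, sum_const, card_univ, nsmul_eq_mul] at hsum
  exact nonneg_of_mul_nonneg_right hsum (by exact_mod_cast Fintype.card_pos)

end Necessity

theorem neg_one_div_le_iff {n x : ℝ} (hn : 0 < n) : -1 / n ≤ x ↔ 0 ≤ 1 + n * x := by
  rw [div_le_iff₀ hn, neg_le_iff_add_nonneg', mul_comm]

theorem hamming_gibbs_psd_iff (N D : ℕ) (hN : 2 ≤ N) (hD : 1 ≤ D) (x : ℝ) :
    IsPSDKernel (fun u v : Fin D → Fin N => x ^ hammingDist u v) ↔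
      x ∈ Set.Icc (-1 / ((N : ℝ) - 1)) 1 := by
  have hN₁ : (0 : ℝ) < N - 1 := by
    have : (2 : ℝ) ≤ N := by exact_mod_cast hN
    linarith
  have hcard : (Fintype.card (Fin N) : ℝ) = N := by simp
  rw [Set.mem_Icc, neg_one_div_le_iff hN₁]
  constructor
  · intro h
    have hK : IsPSDKernel fun a b : Fin N => if a = b then 1 else x := by
      simpa only [pow_hammingDist_update] using
        h.comp (update (fun _ => ⟨0, by omega⟩) (⟨0, hD⟩ : Fin D))
    have : NeZero N := ⟨by omega⟩
    exact ⟨hcard ▸ hK.one_add_mul_nonneg_of_ite,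
      hK.le_one_of_ite (a := ⟨0, by omega⟩) (b := ⟨1, by omega⟩) (by simp)⟩
  · rintro ⟨hlow, hup⟩
    exact isPSDKernel_pow_hammingDist hup (hcard ▸ hlow)
end

section
/- The 3×3 matrix D(x) with rows (1, x, x²), (x, (1+9x+8x²)/18, (x+x²)/2), (x², (x+x²)/2, (1+9x+6x²)/16) is positive semidefinite if and only if x ∈ [x₂, 1/2] ∪ {1}, where x₂ = (−9+√65)/16 is the larger root of 16x²+18x+1 = 0. -/
/-!
Completing the square twice (the `LDLᵀ` decomposition) shows that a symmetric real `3 × 3`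
matrix whose leading `1 × 1` and `2 × 2` minors are positive is positive semidefinite as soon as
its determinant is nonnegative. For `D(x)` the leading `2 × 2` minor is `(1 - x)(1 + 10x)/18`
and the determinant is `(1 - x)²(1 - 2x)(1 + 4x)(16x² + 18x + 1)/288`. Conversely both are
nonnegative when `D(x)` is positive semidefinite, and a sign analysis of these factors leaves
exactly `[x₂, 1/2] ∪ {1}`; the endpoint `x = -1/10` of the minor condition is cut out because
the determinant is negative there. At `x = 1` the minor vanishes, but `D(1)` is the all-ones
matrix.
-/

open Matrix

theorem Matrix.PosSemidef.mul_sub_mul_nonneg {n : Type*} [Fintype n] [DecidableEq n]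
    {M : Matrix n n ℝ} (hM : M.PosSemidef) (i j : n) : 0 ≤ M i i * M j j - M i j * M j i := by
  have h := (hM.submatrix ![i, j]).det_nonneg
  rwa [det_fin_two] at h

theorem Matrix.posSemidef_fin_three_of_det_nonneg {p q r s t u : ℝ} (hp : 0 < p)
    (hm : 0 < p * s - q ^ 2) (hdet : 0 ≤ !![p, q, r; q, s, t; r, t, u].det) :
    !![p, q, r; q, s, t; r, t, u].PosSemidef := by
  refine PosSemidef.of_dotProduct_mulVec_nonneg (by ext i j; fin_cases i <;> fin_cases j <;> rfl)
    fun v => nonneg_of_mul_nonneg_right ?_ (mul_pos hp hm)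
  have ldl : p * (p * s - q ^ 2) * (star v ⬝ᵥ (!![p, q, r; q, s, t; r, t, u] *ᵥ v)) =
      (p * s - q ^ 2) * (p * v 0 + q * v 1 + r * v 2) ^ 2
        + ((p * s - q ^ 2) * v 1 + (p * t - q * r) * v 2) ^ 2
        + p * !![p, q, r; q, s, t; r, t, u].det * v 2 ^ 2 := by
    simp only [dotProduct, Pi.star_apply, star_trivial, mulVec, of_apply, cons_val',
      cons_val_fin_one, Fin.sum_univ_three, cons_val_zero, cons_val_one, cons_val, det_fin_three]
    ring
  rw [ldl]
  positivity

theorem root_le_iff_quadratic_nonneg {x : ℝ} (hx : -9 / 16 ≤ x) :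
    (-9 + √65) / 16 ≤ x ↔ 0 ≤ 16 * x ^ 2 + 18 * x + 1 := by
  have : (-9 + √65) / 16 ≤ x ↔ √65 ≤ 16 * x + 9 := by constructor <;> intro <;> linarith
  rw [this, Real.sqrt_le_iff]
  constructor
  · rintro ⟨-, h⟩
    nlinarith
  · intro h
    constructor <;> nlinarith

theorem det_grassmann_J24 (x : ℝ) :
    !![1, x, x^2;
       x, (1 + 9*x + 8*x^2)/18, (x + x^2)/2;
       x^2, (x + x^2)/2, (1 + 9*x + 6*x^2)/16].det =
      (1 - x) ^ 2 * (1 - 2 * x) * (1 + 4 * x) * (16 * x ^ 2 + 18 * x + 1) / 288 := by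
  simp only [det_fin_three, of_apply, cons_val', cons_val_zero, cons_val_fin_one, cons_val_one,
    cons_val]
  ring

theorem mem_of_minor_nonneg_of_det_nonneg {x : ℝ} (hm : 0 ≤ (1 - x) * (1 + 10 * x))
    (hdet : 0 ≤ (1 - x) ^ 2 * (1 - 2 * x) * (1 + 4 * x) * (16 * x ^ 2 + 18 * x + 1)) :
    x ∈ Set.Icc ((-9 + √65) / 16) (1 / 2) ∪ {1} := by
  rcases eq_or_ne x 1 with rfl | hx1
  · exact Or.inr rfl
  have hlt : x < 1 := by
    by_contra! h
    nlinarith [lt_of_le_of_ne h hx1.symm]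
  have hge : -1 / 10 ≤ x := by nlinarith
  have hrest : 0 ≤ (1 - 2 * x) * (16 * x ^ 2 + 18 * x + 1) := by
    refine nonneg_of_mul_nonneg_right (a := (1 - x) ^ 2 * (1 + 4 * x)) ?_ (by nlinarith)
    linarith
  have hP : 0 ≤ 16 * x ^ 2 + 18 * x + 1 := by
    rcases le_or_gt 0 x with h | h
    · positivity
    · exact nonneg_of_mul_nonneg_right hrest (by linarith)
  refine Or.inl ⟨(root_le_iff_quadratic_nonneg (by linarith)).2 hP, ?_⟩
  by_contra! h
  nlinarith

theorem grassmann_J24_psd_iff (x : ℝ) :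
    (Matrix.PosSemidef
      !![1, x, x^2;
         x, (1 + 9*x + 8*x^2)/18, (x + x^2)/2;
         x^2, (x + x^2)/2, (1 + 9*x + 6*x^2)/16]) ↔
    x ∈ Set.Icc ((-9 + Real.sqrt 65) / 16) (1/2) ∪ {1} := by
  constructor
  · intro h
    have hm : 0 ≤ 1 * ((1 + 9*x + 8*x^2)/18) - x * x := h.mul_sub_mul_nonneg 0 1
    have hdet := h.det_nonneg
    rw [det_grassmann_J24] at hdet
    exact mem_of_minor_nonneg_of_det_nonneg (by nlinarith) (by linarith)
  · rintro (⟨hlo, hhi⟩ | hx1)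
    · have h8 : (8 : ℝ) < √65 := by rw [Real.lt_sqrt] <;> norm_num
      have hP := (root_le_iff_quadratic_nonneg (by linarith)).1 hlo
      refine posSemidef_fin_three_of_det_nonneg one_pos (by nlinarith) ?_
      rw [det_grassmann_J24]
      have : 0 ≤ 1 - 2 * x := by linarith
      have : 0 ≤ 1 + 4 * x := by linarith
      positivity
    · rw [Set.mem_singleton_iff.1 hx1]
      convert posSemidef_vecMulVec_self_star (1 : Fin 3 → ℝ) using 1
      ext i j
      fin_cases i <;> fin_cases j <;> norm_num [vecMulVec]
end

section
/- Let a, b ≥ 2 and define polynomials P_n by P₀ = 1, P₁(x) = x, and x·P_n = (1/(a(b−1)))·P_{n−1} + ((b−2)/(a(b−1)))·P_n + ((a−1)/a)·P_{n+1} for n ≥ 1. Then for z ∈ ℂ \ {0, ±1}, the rescaled polynomials P̃_n(x) := P_n((2/a)·√((a−1)/(b−1))·x + (b−2)/(a(b−1))) satisfy P̃_n((z+z⁻¹)/2) = (c(z)·z^n + c(z⁻¹)·z^{−n}) / ((a−1)(b−1))^{n/2}, where c(z) = ((a−1)z − z⁻¹ + (b−2)√(a−1)/√(b−1)) / (a(z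 − z⁻¹)). -/
/-!
With `r = √((a-1)(b-1))`, the sequence `Qₙ = rⁿ Pₙ(x)` at the rescaled point `x` belonging to
`w = z + z⁻¹` satisfies the Chebyshev recurrence `Qₙ₊₂ = w Qₙ₊₁ - Qₙ`: the factor `r` balances
the outer coefficients `1/(a(b-1))` and `(a-1)/a` of the three-term recurrence. The solutions of
that recurrence are `c zⁿ + d z⁻ⁿ`, and the initial values `Q₀ = 1`, `Q₁ = r x` force
`c = c(z)`, `d = c(z⁻¹)`.
-/

/-- The function `c(z)` appearing in the explicit formula for the Cartier–Dunau
polynomials of the graph `Γ(a,b)`. -/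
noncomputable def cFun (a b : ℕ) (z : ℂ) : ℂ :=
  (((a : ℂ) - 1) * z - z⁻¹ +
      ((b : ℂ) - 2) * (Real.sqrt ((a : ℝ) - 1) : ℂ) / (Real.sqrt ((b : ℝ) - 1) : ℂ)) /
    ((a : ℂ) * (z - z⁻¹))

theorem seq_eq_of_rec_of_eq_init {R : Type*} [Ring R] (w : R) {u v : ℕ → R}
    (hu : ∀ n, u (n + 2) = w * u (n + 1) - u n) (hv : ∀ n, v (n + 2) = w * v (n + 1) - v n)
    (h0 : u 0 = v 0) (h1 : u 1 = v 1) : u = v :=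
  funext <| Nat.twoStepInduction h0 h1 fun n e0 e1 => by rw [hu, hv, e0, e1]

theorem geom_add_geom_inv_rec {K : Type*} [Field K] {z : K} (hz : z ≠ 0) (c d : K) (n : ℕ) :
    c * z ^ (n + 2) + d * z⁻¹ ^ (n + 2)
      = (z + z⁻¹) * (c * z ^ (n + 1) + d * z⁻¹ ^ (n + 1)) - (c * z ^ n + d * z⁻¹ ^ n) := by
  linear_combination (-(c * z ^ n + d * z⁻¹ ^ n)) * mul_inv_cancel₀ hz

theorem rescale_three_term_rec {K : Type*} [Field K] {p : ℕ → K} {x α β γ r : K}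
    (hγ : γ = α * r ^ 2) (hγ0 : γ ≠ 0)
    (hp : ∀ n, x * p (n + 1) = α * p n + β * p (n + 1) + γ * p (n + 2)) (n : ℕ) :
    r ^ (n + 2) * p (n + 2) = (x - β) * r / γ * (r ^ (n + 1) * p (n + 1)) - r ^ n * p n := by
  field_simp
  linear_combination (-r ^ (n + 2)) * hp n + r ^ n * p n * hγ

theorem sub_inv_ne_zero {K : Type*} [Field K] {z : K} (hz0 : z ≠ 0) (hz1 : z ≠ 1)
    (hzneg1 : z ≠ -1) : z - z⁻¹ ≠ 0 := by
  intro h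
  have : z * z = 1 := by nth_rewrite 2 [sub_eq_zero.mp h]; exact mul_inv_cancel₀ hz0
  exact (mul_self_eq_one_iff.mp this).elim hz1 hzneg1

theorem ofReal_sqrt_natCast_sub_one_sq {a : ℕ} (ha : 1 ≤ a) :
    ((Real.sqrt ((a : ℝ) - 1) : ℂ)) ^ 2 = a - 1 := by
  rw [← Complex.ofReal_pow, Real.sq_sqrt (by simpa using ha)]
  push_cast; ring

theorem ofReal_sqrt_natCast_sub_one_ne_zero {a : ℕ} (ha : 2 ≤ a) :
    ((Real.sqrt ((a : ℝ) - 1) : ℂ)) ≠ 0 := by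
  rw [Complex.ofReal_ne_zero, Real.sqrt_ne_zero', sub_pos]
  exact_mod_cast ha

section cFun

variable (a b : ℕ) {z : ℂ}

theorem cFun_add_cFun_inv (ha : (a : ℂ) ≠ 0) (hz : z - z⁻¹ ≠ 0) :
    cFun a b z + cFun a b z⁻¹ = 1 := by
  have hz' : z⁻¹ - z ≠ 0 := sub_ne_zero.mpr (sub_ne_zero.mp hz).symm
  rw [cFun, cFun, inv_inv, div_add_div _ _ (mul_ne_zero ha hz) (mul_ne_zero ha hz'),
    div_eq_one_iff_eq (mul_ne_zero (mul_ne_zero ha hz) (mul_ne_zero ha hz'))]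
  ring

theorem cFun_mul_add_cFun_inv_mul (ha : (a : ℂ) ≠ 0) (hz : z - z⁻¹ ≠ 0) :
    cFun a b z * z + cFun a b z⁻¹ * z⁻¹ =
      (((a : ℂ) - 1) * (z + z⁻¹) +
          ((b : ℂ) - 2) * (Real.sqrt ((a : ℝ) - 1) : ℂ) / (Real.sqrt ((b : ℝ) - 1) : ℂ)) /
        a := by
  have hz' : z⁻¹ - z ≠ 0 := sub_ne_zero.mpr (sub_ne_zero.mp hz).symm
  rw [cFun, cFun, inv_inv, div_mul_eq_mul_div, div_mul_eq_mul_div,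
    div_add_div _ _ (mul_ne_zero ha hz) (mul_ne_zero ha hz'),
    div_eq_div_iff (mul_ne_zero (mul_ne_zero ha hz) (mul_ne_zero ha hz')) ha]
  ring

end cFun

theorem cartier_dunau_explicit_formula (a b : ℕ) (ha : 2 ≤ a) (hb : 2 ≤ b)
    (P : ℕ → ℂ → ℂ)
    (hP0 : ∀ x : ℂ, P 0 x = 1)
    (hP1 : ∀ x : ℂ, P 1 x = x)
    (hrec : ∀ n : ℕ, 1 ≤ n → ∀ x : ℂ,
      x * P n x = (1 / ((a : ℂ) * ((b : ℂ) - 1))) * P (n - 1) x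
        + (((b : ℂ) - 2) / ((a : ℂ) * ((b : ℂ) - 1))) * P n x
        + (((a : ℂ) - 1) / (a : ℂ)) * P (n + 1) x)
    (z : ℂ) (hz0 : z ≠ 0) (hz1 : z ≠ 1) (hzneg1 : z ≠ -1) (n : ℕ) :
    P n ((2 / (a : ℂ)) * (Real.sqrt (((a : ℝ) - 1) / ((b : ℝ) - 1)) : ℂ) * ((z + z⁻¹) / 2)
        + ((b : ℂ) - 2) / ((a : ℂ) * ((b : ℂ) - 1))) =
      (cFun a b z * z ^ n + cFun a b z⁻¹ * (z⁻¹) ^ n) /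
        ((Real.sqrt (((a : ℝ) - 1) * ((b : ℝ) - 1)) : ℂ)) ^ n := by
  have ha0 : (a : ℂ) ≠ 0 := by exact_mod_cast (by omega : a ≠ 0)
  have hz := sub_inv_ne_zero hz0 hz1 hzneg1
  have hA : (0 : ℝ) ≤ a - 1 := by rw [sub_nonneg]; exact_mod_cast (by omega : 1 ≤ a)
  rw [Real.sqrt_div hA, Real.sqrt_mul hA, Complex.ofReal_div, Complex.ofReal_mul]
  set s : ℂ := (Real.sqrt ((a : ℝ) - 1) : ℂ) with hs_def
  set t : ℂ := (Real.sqrt ((b : ℝ) - 1) : ℂ) with ht_def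
  have hs : s ^ 2 = a - 1 := ofReal_sqrt_natCast_sub_one_sq (by omega)
  have ht : t ^ 2 = b - 1 := ofReal_sqrt_natCast_sub_one_sq (by omega)
  have hs0 : s ≠ 0 := ofReal_sqrt_natCast_sub_one_ne_zero ha
  have ht0 : t ≠ 0 := ofReal_sqrt_natCast_sub_one_ne_zero hb
  set x := 2 / (a : ℂ) * (s / t) * ((z + z⁻¹) / 2) + (b - 2) / (a * (b - 1))
    with hx_def
  have hγ : ((a : ℂ) - 1) / a = 1 / (a * (b - 1)) * (s * t) ^ 2 := by
    rw [mul_pow, ← hs, ← ht]; field_simp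
  have hγ0 : ((a : ℂ) - 1) / a ≠ 0 := by rw [← hs]; exact div_ne_zero (pow_ne_zero 2 hs0) ha0
  have hw : (x - (b - 2) / (a * (b - 1))) * (s * t) / ((a - 1) / a) = z + z⁻¹ := by
    rw [hx_def, ← hs, ← ht]; field_simp; ring
  have hx : s * t * x = cFun a b z * z + cFun a b z⁻¹ * z⁻¹ := by
    rw [cFun_mul_add_cFun_inv_mul a b ha0 hz, ← hs_def, ← ht_def, hx_def, ← hs, ← ht]
    field_simp
  have hQ : (fun m => (s * t) ^ m * P m x) =
      fun m => cFun a b z * z ^ m + cFun a b z⁻¹ * z⁻¹ ^ m := by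
    refine seq_eq_of_rec_of_eq_init (z + z⁻¹) (fun m => ?_) (geom_add_geom_inv_rec hz0 _ _)
      (by simp [hP0, cFun_add_cFun_inv a b ha0 hz]) (by simp [hP1, hx])
    rw [← hw]
    exact rescale_three_term_rec (p := (P · x)) hγ hγ0 (fun k => hrec (k + 1) (by omega) x) m
  rw [eq_div_iff (pow_ne_zero n (mul_ne_zero hs0 ht0)), mul_comm]
  exact congrFun hQ n
end

section
/- Let a, b ≥ 2 and let Γ(a,b) be the infinite distance-transitive graph in which a copies of the complete graph on b vertices are tacked together at every vertex in a tree-like way, with graph distance d. For x ∈ ℝ, the kernel Q_x(u,v) = x^{d(u,v)} (with 0^0 = 1) is positive semidefinite on Γ(a,b) if and only if x ∈ [−1/(b−1), 1]. -/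
open scoped ComplexOrder

/-- `G` is (a graph isomorphic to) Macpherson's infinite distance-transitive graph
`Γ(a,b)`, in which `a` copies of the complete graph on `b` vertices are tacked
together at every vertex in a tree-like way.  It is characterized (as a graph) by
being the connected, infinite-diameter, distance-regular graph with valency
`a(b-1)` and intersection numbers `p^n_{1,n+1} = (a-1)(b-1)`, `p^n_{1,n} = b-2`,
`p^n_{1,n-1} = 1` for `n ≥ 1`. -/
structure IsGammaGraph {V : Type*} (G : SimpleGraph V) (a b : ℕ) : Prop where
  connected : G.Connected
  valency : ∀ v : V, {w : V | G.Adj v w}.ncard = a * (b - 1)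
  forward : ∀ (u v : V) (n : ℕ), 1 ≤ n → G.dist u v = n →
    {z : V | G.Adj v z ∧ G.dist u z = n + 1}.ncard = (a - 1) * (b - 1)
  same : ∀ (u v : V) (n : ℕ), 1 ≤ n → G.dist u v = n →
    {z : V | G.Adj v z ∧ G.dist u z = n}.ncard = b - 2
  backward : ∀ (u v : V) (n : ℕ), 1 ≤ n → G.dist u v = n →
    {z : V | G.Adj v z ∧ G.dist u z = n - 1}.ncard = 1
  unboundedDiam : ∀ n : ℕ, ∃ u v : V, G.dist u v = n

/-!
Necessity: on an edge the coefficients `1, -1` give the value `2 (1 - x)`, and on one of the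
`b`-cliques of `Γ(a,b)` the all-ones coefficients give `b (1 + (b - 1) x)`.

Sufficiency: fix a root `o` and let `v` be a vertex of a finite configuration farthest from `o`,
with parent `p`. The vertices `Z` of the configuration lying in the `b`-clique through `v` and
`p`, other than `p`, are all at distance `d(w, p) + 1` from every other vertex `w` of the
configuration. Hence the form equals the form of the configuration with `Z` merged into `p`
(whose coefficient grows by `x ∑_Z c`) plus `(1 - x) (∑_Z c² + x (∑_Z c)²)`, which is
nonnegative by Cauchy–Schwarz since `|Z| ≤ b - 1`. Induct on the total distance to `o`.
-/

open Finset SimpleGraph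

theorem sum_sq_add_mul_sq_sum_nonneg {ι : Type*} (s : Finset ι) (f : ι → ℝ) {x : ℝ}
    (hx : -1 ≤ x * #s) : 0 ≤ ∑ i ∈ s, f i ^ 2 + x * (∑ i ∈ s, f i) ^ 2 := by
  rcases le_or_gt 0 x with hx0 | hx0
  · positivity
  have hCS : (∑ i ∈ s, f i) ^ 2 ≤ #s * ∑ i ∈ s, f i ^ 2 := sq_sum_le_card_mul_sum_sq
  have hsq : 0 ≤ ∑ i ∈ s, f i ^ 2 := sum_nonneg fun i _ => sq_nonneg (f i)
  nlinarith [mul_le_mul_of_nonpos_left hCS hx0.le, mul_nonneg (by linarith : 0 ≤ x * #s + 1) hsq]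

theorem sum_insert_sdiff_lt {V : Type*} [DecidableEq V] {f : V → ℕ} {S Z : Finset V} {p v : V}
    (hZ : Z ⊆ insert p S) (hv : v ∈ Z) (hpv : f p < f v) :
    ∑ w ∈ insert p S \ Z, f w < ∑ w ∈ S, f w := by
  have hsplit := sum_sdiff (f := f) hZ
  have hvZ : f v ≤ ∑ z ∈ Z, f z := single_le_sum (fun _ _ => Nat.zero_le _) hv
  have hins : ∑ w ∈ insert p S, f w ≤ f p + ∑ w ∈ S, f w := by
    by_cases hpS : p ∈ S
    · rw [insert_eq_of_mem hpS]; omega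
    · rw [sum_insert hpS]
  omega

section KernelQuadForm

variable {V : Type*} (K : V → V → ℝ)

noncomputable def kernelQuadForm (S : Finset V) (c : V → ℝ) : ℝ :=
  ∑ v ∈ S, ∑ w ∈ S, c v * c w * K v w

variable {K}

theorem kernelQuadForm_image [DecidableEq V] {n : ℕ} (u : Fin n → V) (r : Fin n → ℝ) :
    kernelQuadForm K (univ.image u) (fun v => ∑ i with u i = v, r i)
      = ∑ i, ∑ j, r i * r j * K (u i) (u j) := by
  have hfiber : ∀ F : V → ℝ,
      ∑ v ∈ univ.image u, (∑ i with u i = v, r i) * F v = ∑ i, r i * F (u i) := by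
    intro F
    rw [← sum_fiberwise_of_maps_to fun i _ => mem_image_of_mem u (mem_univ i)]
    refine sum_congr rfl fun v _ => ?_
    rw [sum_mul]
    exact sum_congr rfl fun i hi => by rw [(mem_filter.1 hi).2]
  simp only [kernelQuadForm, mul_assoc, ← mul_sum, hfiber]

theorem sum_mul_conj_eq_sum_re_add_sum_im (hK : ∀ u v, K u v = K v u) {n : ℕ} (u : Fin n → V)
    (c : Fin n → ℂ) :
    ∑ i, ∑ j, c i * (starRingEnd ℂ) (c j) * (K (u i) (u j) : ℂ)
      = ((∑ i, ∑ j, (c i).re * (c j).re * K (u i) (u j)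
          + ∑ i, ∑ j, (c i).im * (c j).im * K (u i) (u j) : ℝ) : ℂ) := by
  apply Complex.ext
  · simp only [Complex.re_sum, Complex.ofReal_re, ← sum_add_distrib]
    refine sum_congr rfl fun i _ => sum_congr rfl fun j _ => ?_
    simp only [Complex.mul_re, Complex.mul_im, Complex.conj_re, Complex.conj_im,
      Complex.ofReal_re, Complex.ofReal_im]
    ring
  · set f : Fin n → Fin n → ℝ := fun i j => (c i * (starRingEnd ℂ) (c j) * (K (u i) (u j) : ℂ)).im
    have hanti : ∀ i j, f i j = -f j i := fun i j => by
      simp only [f, Complex.mul_re, Complex.mul_im, Complex.conj_re, Complex.conj_im,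
        Complex.ofReal_re, Complex.ofReal_im, hK (u i)]
      ring
    have hzero : ∑ i, ∑ j, f i j = 0 := by
      have h : ∑ i, ∑ j, f i j = -∑ i, ∑ j, f i j :=
        calc ∑ i, ∑ j, f i j = ∑ i, ∑ j, -f j i :=
              sum_congr rfl fun i _ => sum_congr rfl fun j _ => hanti i j
          _ = -∑ i, ∑ j, f i j := by rw [sum_comm]; simp only [sum_neg_distrib]
      linarith
    simpa only [Complex.im_sum, Complex.ofReal_im] using hzero

theorem isPSDKernel_iff_kernelQuadForm_nonneg (hK : ∀ u v, K u v = K v u) :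
    IsPSDKernel K ↔ ∀ (S : Finset V) (c : V → ℝ), 0 ≤ kernelQuadForm K S c := by
  classical
  constructor
  · intro h S c
    have hsum : ∀ f : V → ℝ, ∑ i, f (S.equivFin.symm i) = ∑ v ∈ S, f v := fun f =>
      (S.equivFin.symm.sum_comp (fun v => f v)).trans (sum_coe_sort S f)
    have hpsd := h S.card (fun i => S.equivFin.symm i) (fun i => c (S.equivFin.symm i))
    simp only [Complex.conj_ofReal, ← Complex.ofReal_mul, ← Complex.ofReal_sum,
      Complex.zero_le_real] at hpsd
    have hinner : ∀ v, ∑ j, c v * c (S.equivFin.symm j) * K v (S.equivFin.symm j)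
        = ∑ w ∈ S, c v * c w * K v w := fun v => hsum fun w => c v * c w * K v w
    simp only [hinner, hsum fun v => ∑ w ∈ S, c v * c w * K v w] at hpsd
    exact hpsd
  · intro h n u c
    rw [sum_mul_conj_eq_sum_re_add_sum_im hK, Complex.zero_le_real, ← kernelQuadForm_image,
      ← kernelQuadForm_image]
    exact add_nonneg (h _ _) (h _ _)

theorem kernelQuadForm_add_single [DecidableEq V] (hK : ∀ u v, K u v = K v u) {W : Finset V}
    {p : V} (hp : p ∈ W) (c : V → ℝ) (t : ℝ) :
    kernelQuadForm K W (c + Pi.single p t)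
      = kernelQuadForm K W c + 2 * t * ∑ w ∈ W, c w * K p w + t ^ 2 * K p p := by
  set s : V → ℝ := Pi.single p t
  have hsingle : ∀ f : V → ℝ, ∑ v ∈ W, s v * f v = t * f p := fun f =>
    (sum_eq_single_of_mem p hp fun v _ hv => by simp [s, hv]).trans (by simp [s])
  have hexpand : ∀ v w, (c + s) v * (c + s) w * K v w
      = c v * c w * K v w + s w * (c v * K v w) + s v * (c w * K v w) + s v * (s w * K v w) := by
    intro v w
    simp only [Pi.add_apply]
    ring
  simp only [kernelQuadForm, hexpand, sum_add_distrib, ← mul_sum, hsingle]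
  simp only [hK _ p]
  ring

theorem kernelQuadForm_of_eq_ite [DecidableEq V] {Z : Finset V} {x : ℝ}
    (hZ : ∀ z ∈ Z, ∀ z' ∈ Z, K z z' = if z = z' then 1 else x) (c : V → ℝ) :
    kernelQuadForm K Z c = x * (∑ z ∈ Z, c z) ^ 2 + (1 - x) * ∑ z ∈ Z, c z ^ 2 := by
  have hsplit : ∀ z ∈ Z, ∑ z' ∈ Z, c z * c z' * K z z'
      = x * (c z * ∑ z' ∈ Z, c z') + (1 - x) * c z ^ 2 := by
    intro z hz
    have hterm : ∀ z' ∈ Z, c z * c z' * K z z'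
        = x * (c z * c z') + if z = z' then (1 - x) * c z ^ 2 else 0 := by
      intro z' hz'
      rw [hZ z hz z' hz']
      split_ifs with h
      · subst h; ring
      · ring
    rw [sum_congr rfl hterm, sum_add_distrib, sum_ite_eq, if_pos hz, ← mul_sum, ← mul_sum]
  rw [kernelQuadForm, sum_congr rfl hsplit, sum_add_distrib, ← mul_sum, ← mul_sum, ← sum_mul]
  ring

theorem kernelQuadForm_union [DecidableEq V] (hK : ∀ u v, K u v = K v u) {Z W : Finset V}
    (hZW : Disjoint Z W) (c : V → ℝ) :
    kernelQuadForm K (Z ∪ W) c = kernelQuadForm K Z c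
      + 2 * ∑ w ∈ W, ∑ z ∈ Z, c w * c z * K w z + kernelQuadForm K W c := by
  have hcross : ∑ z ∈ Z, ∑ w ∈ W, c z * c w * K z w = ∑ w ∈ W, ∑ z ∈ Z, c w * c z * K w z := by
    rw [sum_comm]
    exact sum_congr rfl fun w _ => sum_congr rfl fun z _ => by rw [hK]; ring
  simp only [kernelQuadForm, sum_union hZW, sum_add_distrib, hcross]
  ring

theorem kernelQuadForm_union_eq_add_single [DecidableEq V] (hK : ∀ u v, K u v = K v u)
    {Z W : Finset V} (hZW : Disjoint Z W) {p : V} (hp : p ∈ W) (hpp : K p p = 1) {x : ℝ}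
    (hZ : ∀ z ∈ Z, ∀ z' ∈ Z, K z z' = if z = z' then 1 else x)
    (hWZ : ∀ w ∈ W, ∀ z ∈ Z, K w z = x * K w p) (c : V → ℝ) :
    kernelQuadForm K (Z ∪ W) c
      = kernelQuadForm K W (c + Pi.single p (x * ∑ z ∈ Z, c z))
        + (1 - x) * (∑ z ∈ Z, c z ^ 2 + x * (∑ z ∈ Z, c z) ^ 2) := by
  have hcross : ∑ w ∈ W, ∑ z ∈ Z, c w * c z * K w z
      = x * (∑ z ∈ Z, c z) * ∑ w ∈ W, c w * K p w := by
    rw [mul_sum]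
    refine sum_congr rfl fun w hw => ?_
    rw [sum_congr rfl fun z hz => by rw [hWZ w hw z hz], hK p, mul_sum, sum_mul]
    exact sum_congr rfl fun z _ => by ring
  rw [kernelQuadForm_union hK hZW, kernelQuadForm_of_eq_ite hZ, hcross,
    kernelQuadForm_add_single hK hp, hpp]
  ring

theorem exists_kernelQuadForm_insert_eq [DecidableEq V] (S : Finset V) (c : V → ℝ) (p : V) :
    ∃ c' : V → ℝ, kernelQuadForm K (insert p S) c' = kernelQuadForm K S c := by
  by_cases hp : p ∈ S
  · exact ⟨c, by rw [insert_eq_of_mem hp]⟩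
  refine ⟨Function.update c p 0, ?_⟩
  have hS : ∀ v ∈ S, Function.update c p 0 v = c v := fun v hv =>
    Function.update_of_ne (ne_of_mem_of_not_mem hv hp) _ _
  simp only [kernelQuadForm, sum_insert hp, Function.update_self, zero_mul, mul_zero,
    sum_const_zero, zero_add]
  exact sum_congr rfl fun v hv => sum_congr rfl fun w hw => by rw [hS v hv, hS w hw]

end KernelQuadForm

section PowDist

variable {V : Type*} {G : SimpleGraph V} {x : ℝ}

theorem pow_dist_of_isClique {s : Set V} (hs : G.IsClique s) {u v : V} (hu : u ∈ s) (hv : v ∈ s)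
    [Decidable (u = v)] : x ^ G.dist u v = if u = v then 1 else x := by
  split_ifs with h
  · rw [h, dist_self, pow_zero]
  · rw [dist_eq_one_iff_adj.mpr (hs hu hv h), pow_one]

theorem kernelQuadForm_pow_dist_of_isClique [DecidableEq V] {s : Finset V}
    (hs : G.IsClique (s : Set V)) (c : V → ℝ) :
    kernelQuadForm (fun u v => x ^ G.dist u v) s c
      = x * (∑ v ∈ s, c v) ^ 2 + (1 - x) * ∑ v ∈ s, c v ^ 2 :=
  kernelQuadForm_of_eq_ite (fun _ hu _ hv => pow_dist_of_isClique hs hu hv) c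

theorem le_one_of_kernelQuadForm_pow_dist_nonneg {u v : V} (huv : G.Adj u v)
    (h : ∀ S c, 0 ≤ kernelQuadForm (fun u v => x ^ G.dist u v) S c) : x ≤ 1 := by
  classical
  have hpair := h {u, v} fun w => if w = u then 1 else -1
  rw [kernelQuadForm_pow_dist_of_isClique (by simpa [isClique_pair] using fun _ => huv)] at hpair
  norm_num [sum_pair huv.ne, huv.ne'] at hpair
  linarith

theorem neg_one_le_mul_of_kernelQuadForm_pow_dist_nonneg {n : ℕ} {s : Finset V}
    (hs : G.IsNClique n s) (hn : 0 < n)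
    (h : ∀ S c, 0 ≤ kernelQuadForm (fun u v => x ^ G.dist u v) S c) :
    -1 ≤ x * ((n : ℝ) - 1) := by
  classical
  have hclique := h s 1
  simp only [kernelQuadForm_pow_dist_of_isClique hs.isClique, Pi.one_apply, sum_const, hs.card_eq,
    nsmul_eq_mul, mul_one, one_pow] at hclique
  have hn' : (0 : ℝ) < n := by exact_mod_cast hn
  nlinarith

end PowDist

/-- In `Γ(a,b)` this is the unique `b`-clique containing the edge `v p`. -/
def SimpleGraph.edgeClique {V : Type*} (G : SimpleGraph V) (v p : V) : Set V :=
  insert v (insert p (G.commonNeighbors v p))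

namespace IsGammaGraph

variable {V : Type*} {G : SimpleGraph V} {a b : ℕ} {o u v w p y z : V}

theorem finite_neighborSet (hG : IsGammaGraph G a b) (ha : 0 < a) (hb : 2 ≤ b) (v : V) :
    (G.neighborSet v).Finite := by
  by_contra h
  have hval : (G.neighborSet v).ncard = a * (b - 1) := hG.valency v
  rw [Set.Infinite.ncard h] at hval
  exact absurd hval.symm (Nat.mul_ne_zero ha.ne' (by omega))

theorem ncard_commonNeighbors (hG : IsGammaGraph G a b) (hvp : G.Adj v p) :
    (G.commonNeighbors v p).ncard = b - 2 := by
  have h := hG.same p v 1 le_rfl (dist_eq_one_iff_adj.mpr hvp.symm)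
  have hset : {z | G.Adj v z ∧ G.dist p z = 1} = G.commonNeighbors v p := by
    ext z; simp [mem_commonNeighbors]
  rwa [hset] at h

theorem existsUnique_adj_dist_add_one (hG : IsGammaGraph G a b) (hv : G.dist o v ≠ 0) :
    ∃! p, G.Adj v p ∧ G.dist o p + 1 = G.dist o v := by
  obtain ⟨p, hp⟩ := Set.ncard_eq_one.mp (hG.backward o v _ (Nat.one_le_iff_ne_zero.mpr hv) rfl)
  have hmem := fun q => Set.ext_iff.mp hp q
  refine ⟨p, ?_, fun q hq => (hmem q).mp ⟨hq.1, by omega⟩⟩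
  obtain ⟨hvp, hlevel⟩ := (hmem p).mpr rfl
  exact ⟨hvp, by omega⟩

theorem adj_of_mem_commonNeighbors (hG : IsGammaGraph G a b) (huv : G.Adj u v)
    (hz : z ∈ G.commonNeighbors u v) (hw : w ∈ G.commonNeighbors u v) (hzw : z ≠ w) :
    G.Adj z w := by
  rw [mem_commonNeighbors] at hz hw
  by_contra hnadj
  have hdist : G.dist z w = 2 := by
    have := hG.connected.dist_triangle (u := z) (v := v) (w := w)
    have h0 : G.dist z w ≠ 0 := fun h => hzw (hG.connected.dist_eq_zero_iff.mp h)
    have h1 : G.dist z w ≠ 1 := fun h => hnadj (dist_eq_one_iff_adj.mp h)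
    simp only [dist_eq_one_iff_adj.mpr hz.2.symm, dist_eq_one_iff_adj.mpr hw.2] at this
    omega
  obtain ⟨q, -, hq⟩ := hG.existsUnique_adj_dist_add_one (o := z) (v := w) (by omega)
  have hu := hq u ⟨hw.1.symm, by rw [hdist, dist_eq_one_iff_adj.mpr hz.1.symm]⟩
  have hv := hq v ⟨hw.2.symm, by rw [hdist, dist_eq_one_iff_adj.mpr hz.2.symm]⟩
  exact huv.ne (hu.trans hv.symm)

theorem isClique_edgeClique (hG : IsGammaGraph G a b) (hvp : G.Adj v p) :
    G.IsClique (G.edgeClique v p) := by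
  rw [edgeClique, isClique_insert, isClique_insert]
  refine ⟨⟨fun z hz w hw hzw => hG.adj_of_mem_commonNeighbors hvp hz hw hzw,
    fun z hz _ => (G.mem_commonNeighbors.mp hz).2⟩, fun z hz _ => ?_⟩
  rcases Set.mem_insert_iff.mp hz with rfl | hz
  · exact hvp
  · exact (G.mem_commonNeighbors.mp hz).1

theorem finite_edgeClique (hG : IsGammaGraph G a b) (ha : 0 < a) (hb : 2 ≤ b) (v p : V) :
    (G.edgeClique v p).Finite :=
  (((hG.finite_neighborSet ha hb v).subset
    (G.commonNeighbors_subset_neighborSet_left v p)).insert p).insert v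

theorem ncard_edgeClique (hG : IsGammaGraph G a b) (ha : 0 < a) (hb : 2 ≤ b)
    (hvp : G.Adj v p) : (G.edgeClique v p).ncard = b := by
  have hfin := (hG.finite_neighborSet ha hb v).subset
    (G.commonNeighbors_subset_neighborSet_left v p)
  have hv : v ∉ insert p (G.commonNeighbors v p) := by
    rintro (h | h)
    · exact hvp.ne h
    · exact G.notMem_commonNeighbors_left v p h
  rw [edgeClique, Set.ncard_insert_of_notMem hv (hfin.insert p),
    Set.ncard_insert_of_notMem (G.notMem_commonNeighbors_right v p) hfin,
    hG.ncard_commonNeighbors hvp]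
  omega

theorem edgeClique_eq (hG : IsGammaGraph G a b) (ha : 0 < a) (hb : 2 ≤ b) (hvp : G.Adj v p)
    (hy : y ∈ G.edgeClique v p) (hz : z ∈ G.edgeClique v p) (hyz : y ≠ z) :
    G.edgeClique y z = G.edgeClique v p := by
  have hyz' : G.Adj y z := hG.isClique_edgeClique hvp hy hz hyz
  refine (Set.eq_of_subset_of_ncard_le (fun t ht => ?_) ?_ (hG.finite_edgeClique ha hb y z)).symm
  · by_cases hty : t = y
    · rw [hty]; exact Set.mem_insert y _
    by_cases htz : t = z
    · rw [htz]; exact Set.mem_insert_of_mem y (Set.mem_insert z _)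
    refine Set.mem_insert_of_mem y (Set.mem_insert_of_mem z (G.mem_commonNeighbors.mpr ⟨?_, ?_⟩))
    · exact hG.isClique_edgeClique hvp hy ht (Ne.symm hty)
    · exact hG.isClique_edgeClique hvp hz ht (Ne.symm htz)
  · rw [hG.ncard_edgeClique ha hb hyz', hG.ncard_edgeClique ha hb hvp]

theorem dist_eq_of_mem_edgeClique (hG : IsGammaGraph G a b) (hvp : G.Adj v p)
    (hp : G.dist o p + 1 = G.dist o v) (hz : z ∈ G.edgeClique v p) (hzp : z ≠ p) :
    G.dist o z = G.dist o v := by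
  rcases hz with rfl | rfl | hz
  · rfl
  · exact absurd rfl hzp
  obtain ⟨hvz, hpz⟩ := G.mem_commonNeighbors.mp hz
  have hparent := hG.existsUnique_adj_dist_add_one (o := o) (v := v) (by omega)
  have hnot : G.dist o z + 1 ≠ G.dist o v := fun h => hzp (hparent.unique ⟨hvz, h⟩ ⟨hvp, hp⟩)
  have := hvz.diff_dist_adj (u := o)
  have := hpz.diff_dist_adj (u := o)
  omega

theorem mem_commonNeighbors_of_dist_eq (hG : IsGammaGraph G a b) (ha : 0 < a) (hb : 2 ≤ b)
    (hvp : G.Adj v p) (hp : G.dist o p + 1 = G.dist o v) (hvz : G.Adj v z)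
    (hz : G.dist o z = G.dist o v) : z ∈ G.commonNeighbors v p := by
  have hsub : G.commonNeighbors v p ⊆ {z | G.Adj v z ∧ G.dist o z = G.dist o v} := by
    intro z hz
    obtain ⟨hvz, hpz⟩ := G.mem_commonNeighbors.mp hz
    exact ⟨hvz, hG.dist_eq_of_mem_edgeClique hvp hp
      (Set.mem_insert_of_mem _ (Set.mem_insert_of_mem _ hz)) hpz.ne'⟩
  have heq := Set.eq_of_subset_of_ncard_le hsub
    (by rw [hG.same o v _ (by omega) rfl, hG.ncard_commonNeighbors hvp])
    ((hG.finite_neighborSet ha hb v).subset fun z hz => hz.1)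
  exact heq ▸ ⟨hvz, hz⟩

theorem dist_eq_dist_add_one_of_parent (hG : IsGammaGraph G a b) (ha : 0 < a) (hb : 2 ≤ b)
    (hvp : G.Adj v p) (hp : G.dist o p + 1 = G.dist o v) (hw : G.dist o w ≤ G.dist o v)
    (hwp : w ∈ G.edgeClique v p → w = p) : G.dist v w = G.dist p w + 1 := by
  induction hm : G.dist v w using Nat.strong_induction_on generalizing v p with
  | _ m ih =>
  have hwv : w ≠ v := by
    rintro rfl
    exact hvp.ne (hwp (Set.mem_insert _ _))
  have hm0 : G.dist w v ≠ 0 := fun h => hwv (hG.connected.dist_eq_zero_iff.mp h)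
  -- `q` is the next vertex on a geodesic from `v` to `w`: a sibling, a child or the parent of `v`.
  obtain ⟨q, ⟨hvq, hq⟩, -⟩ := hG.existsUnique_adj_dist_add_one hm0
  rw [dist_comm (u := w), dist_comm (u := w)] at hq
  rcases hvq.diff_dist_adj (u := o) with hlev | hlev | hlev
  · have hqCN := hG.mem_commonNeighbors_of_dist_eq ha hb hvp hp hvq hlev
    have hqp : G.Adj q p := (G.mem_commonNeighbors.mp hqCN).2.symm
    have hqB : q ∈ G.edgeClique v p := Set.mem_insert_of_mem _ (Set.mem_insert_of_mem _ hqCN)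
    have hBeq : G.edgeClique q p = G.edgeClique v p :=
      hG.edgeClique_eq ha hb hvp hqB (Set.mem_insert_of_mem _ (Set.mem_insert _ _)) hqp.ne
    have hqw := ih _ (by omega) hqp (by omega) (by omega) (hBeq ▸ hwp) rfl
    have := hG.connected.dist_triangle (u := v) (v := p) (w := w)
    rw [dist_eq_one_iff_adj.mpr hvp] at this
    omega
  · have hwB : w ∈ G.edgeClique q v → w = v := fun h => by
      by_contra hne
      have := hG.dist_eq_of_mem_edgeClique (o := o) hvq.symm (by omega) h hne
      omega
    have := ih _ (by omega) hvq.symm (by omega) (by omega) hwB rfl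
    omega
  · have hqp : q = p :=
      (hG.existsUnique_adj_dist_add_one (o := o) (v := v) (by omega)).unique
        ⟨hvq, by omega⟩ ⟨hvp, hp⟩
    subst hqp
    omega

theorem dist_eq_dist_add_one_of_mem_edgeClique (hG : IsGammaGraph G a b) (ha : 0 < a)
    (hb : 2 ≤ b) (hvp : G.Adj v p) (hp : G.dist o p + 1 = G.dist o v)
    (hz : z ∈ G.edgeClique v p) (hzp : z ≠ p) (hw : G.dist o w ≤ G.dist o v)
    (hwp : w ∈ G.edgeClique v p → w = p) : G.dist w z = G.dist w p + 1 := by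
  have hpB : p ∈ G.edgeClique v p := Set.mem_insert_of_mem _ (Set.mem_insert _ _)
  have hzlevel := hG.dist_eq_of_mem_edgeClique (o := o) hvp hp hz hzp
  rw [dist_comm, dist_comm (u := w)]
  exact hG.dist_eq_dist_add_one_of_parent (o := o) ha hb (hG.isClique_edgeClique hvp hz hpB hzp)
    (by omega) (by omega) (by rwa [hG.edgeClique_eq ha hb hvp hz hpB hzp])

theorem card_lt_of_subset_edgeClique (hG : IsGammaGraph G a b) (ha : 0 < a) (hb : 2 ≤ b)
    (hvp : G.Adj v p) {Z : Finset V} (hZ : (Z : Set V) ⊆ G.edgeClique v p) (hpZ : p ∉ Z) :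
    #Z < b := by
  classical
  have hsub : ((insert p Z : Finset V) : Set V) ⊆ G.edgeClique v p := by
    rw [coe_insert]
    exact Set.insert_subset (Set.mem_insert_of_mem _ (Set.mem_insert _ _)) hZ
  have hcard := Set.ncard_le_ncard hsub (hG.finite_edgeClique ha hb v p)
  rw [Set.ncard_coe_finset, card_insert_of_notMem hpZ, hG.ncard_edgeClique ha hb hvp] at hcard
  omega

theorem exists_kernelQuadForm_pow_dist_le (hG : IsGammaGraph G a b) (ha : 0 < a) (hb : 2 ≤ b)
    {x : ℝ} (hx₀ : -1 ≤ x * ((b : ℝ) - 1)) (hx₁ : x ≤ 1) {S : Finset V} (c : V → ℝ)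
    (hvS : v ∈ S) (hmax : ∀ w ∈ S, G.dist o w ≤ G.dist o v) (hv : G.dist o v ≠ 0) :
    ∃ (S' : Finset V) (c' : V → ℝ), ∑ w ∈ S', G.dist o w < ∑ w ∈ S, G.dist o w ∧
      kernelQuadForm (fun u w => x ^ G.dist u w) S' c'
        ≤ kernelQuadForm (fun u w => x ^ G.dist u w) S c := by
  classical
  obtain ⟨p, ⟨hvp, hp⟩, -⟩ := hG.existsUnique_adj_dist_add_one hv
  obtain ⟨c₁, hc₁⟩ := exists_kernelQuadForm_insert_eq (K := fun u w => x ^ G.dist u w) S c p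
  set Z := (insert p S).filter fun z => z ∈ G.edgeClique v p ∧ z ≠ p
  set W := insert p S \ Z
  have hZS : Z ⊆ insert p S := filter_subset _ _
  have hZ : ∀ z ∈ Z, z ∈ G.edgeClique v p ∧ z ≠ p := fun z hz => (mem_filter.mp hz).2
  have hpZ : p ∉ Z := fun h => (hZ p h).2 rfl
  have hW : ∀ w ∈ W, w ∈ G.edgeClique v p → w = p := fun w hw h => by
    by_contra hwp
    exact (mem_sdiff.mp hw).2 (mem_filter.mpr ⟨(mem_sdiff.mp hw).1, h, hwp⟩)
  have hlevel : ∀ w ∈ insert p S, G.dist o w ≤ G.dist o v := by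
    intro w hw
    rcases mem_insert.mp hw with rfl | hw
    · omega
    · exact hmax w hw
  have hcollapse := kernelQuadForm_union_eq_add_single (K := fun u w => x ^ G.dist u w) (Z := Z)
    (W := W) (fun u w => by rw [SimpleGraph.dist_comm]) disjoint_sdiff
    (mem_sdiff.mpr ⟨mem_insert_self p S, hpZ⟩) (by simp)
    (fun z hz z' hz' => pow_dist_of_isClique (hG.isClique_edgeClique hvp) (hZ z hz).1 (hZ z' hz').1)
    (fun w hw z hz => by
      rw [hG.dist_eq_dist_add_one_of_mem_edgeClique ha hb hvp hp (hZ z hz).1 (hZ z hz).2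
        (hlevel w (mem_sdiff.mp hw).1) (hW w hw), pow_succ, mul_comm])
    c₁
  rw [union_sdiff_of_subset hZS] at hcollapse
  have hZcard : (#Z : ℝ) + 1 ≤ b := by
    exact_mod_cast hG.card_lt_of_subset_edgeClique ha hb hvp (fun z hz => (hZ z hz).1) hpZ
  have hrem := sum_sq_add_mul_sq_sum_nonneg Z c₁ (x := x) (by
    rcases le_or_gt 0 x with hx | hx <;> nlinarith)
  refine ⟨W, c₁ + Pi.single p (x * ∑ z ∈ Z, c₁ z), ?_, ?_⟩
  · exact sum_insert_sdiff_lt hZS (mem_filter.mpr ⟨mem_insert_of_mem hvS, Set.mem_insert _ _,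
      hvp.ne⟩) (by omega)
  · rw [← hc₁, hcollapse]
    linarith [mul_nonneg (sub_nonneg.mpr hx₁) hrem]

theorem kernelQuadForm_pow_dist_nonneg (hG : IsGammaGraph G a b) (ha : 0 < a) (hb : 2 ≤ b)
    {x : ℝ} (hx₀ : -1 ≤ x * ((b : ℝ) - 1)) (hx₁ : x ≤ 1) (S : Finset V) (c : V → ℝ) :
    0 ≤ kernelQuadForm (fun u w => x ^ G.dist u w) S c := by
  obtain ⟨o⟩ := hG.connected.nonempty
  induction hN : ∑ w ∈ S, G.dist o w using Nat.strong_induction_on generalizing S c with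
  | _ N ih =>
  rcases S.eq_empty_or_nonempty with rfl | hS
  · simp [kernelQuadForm]
  obtain ⟨v, hvS, hmax⟩ := S.exists_max_image (G.dist o) hS
  by_cases hv : G.dist o v = 0
  · have hSo : S = {o} := eq_singleton_iff_unique_mem.mpr
      ⟨hG.connected.dist_eq_zero_iff.mp hv ▸ hvS, fun w hw =>
        (hG.connected.dist_eq_zero_iff.mp (by have := hmax w hw; omega)).symm⟩
    subst hSo
    simpa [kernelQuadForm] using mul_self_nonneg (c o)
  obtain ⟨S', c', hlt, hle⟩ := hG.exists_kernelQuadForm_pow_dist_le ha hb hx₀ hx₁ c hvS hmax hv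
  exact (ih _ (hN ▸ hlt) S' c' rfl).trans hle

theorem exists_isNClique (hG : IsGammaGraph G a b) (ha : 0 < a) (hb : 2 ≤ b) :
    ∃ s : Finset V, G.IsNClique b s := by
  obtain ⟨u, v, huv⟩ := hG.unboundedDiam 1
  have hadj := dist_eq_one_iff_adj.mp huv
  have hfin := hG.finite_edgeClique ha hb u v
  refine ⟨hfin.toFinset, ?_, ?_⟩
  · rw [Set.Finite.coe_toFinset]
    exact hG.isClique_edgeClique hadj
  · rw [← Set.ncard_eq_toFinset_card _ hfin, hG.ncard_edgeClique ha hb hadj]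

end IsGammaGraph

theorem gamma_graph_gibbs_psd_iff (a b : ℕ) (ha : 2 ≤ a) (hb : 2 ≤ b)
    {V : Type*} (G : SimpleGraph V) (hG : IsGammaGraph G a b) (x : ℝ) :
    IsPSDKernel (fun u v : V => x ^ G.dist u v) ↔
      x ∈ Set.Icc (-1 / ((b : ℝ) - 1)) 1 := by
  have hb₁ : (0 : ℝ) < b - 1 := by
    have : (2 : ℝ) ≤ b := by exact_mod_cast hb
    linarith
  rw [isPSDKernel_iff_kernelQuadForm_nonneg fun u v => by rw [SimpleGraph.dist_comm], Set.mem_Icc,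
    div_le_iff₀ hb₁]
  constructor
  · intro h
    obtain ⟨s, hs⟩ := hG.exists_isNClique (by omega) hb
    obtain ⟨u, v, huv⟩ := hG.unboundedDiam 1
    exact ⟨neg_one_le_mul_of_kernelQuadForm_pow_dist_nonneg hs (by omega) h,
      le_one_of_kernelQuadForm_pow_dist_nonneg (dist_eq_one_iff_adj.mp huv) h⟩
  · rintro ⟨hx₀, hx₁⟩
    exact hG.kernelQuadForm_pow_dist_nonneg (by omega) hb hx₀ hx₁
end
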